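/- arXiv:2409.12947 — 2 statements merged into one kernel-verified Lean document; each statement's English description precedes it below -/
import Mathlib

section
/- (Tweedie's formula) Let X be a real random variable with density bounded appropriately, Z ~ N(0,1) independent of X, and τ > 0. Let p(·; τ) denote the density of X + τZ. Then for all y, E[X | X + τZ = y] = y + τ² · ∂_y log p(y; τ). -/
/-!
Given `X = x`, the variable `Y = X + W` has density `φ_v(y - x)`, so the joint law of `(Y, X)` has
density `φ_v(y - x)` with respect to `volume ⊗ law(X)` and `Y` has density
`p(y) = E φ_v(y - X)`. Differentiating under the integral sign,
`v p'(y) = E[(X - y) φ_v(y - X)]`, that is `(y + v (log p)'(y)) p(y) = E[X φ_v(y - X)]`.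
Integrated over `y ∈ A` against the joint density, this says `E[X; Y ∈ A] = E[g(Y); Y ∈ A]` for
`g(y) = y + v (log p)'(y)`, which characterises `g(Y)` as `E[X | Y]`.
-/

open MeasureTheory ProbabilityTheory
open scoped NNReal ENNReal Real

lemma abs_mul_exp_neg_sq_div_le {v : ℝ} (hv : 0 < v) (u : ℝ) :
    |u| * Real.exp (-u ^ 2 / (2 * v)) ≤ √v := by
  obtain ⟨s, hs, rfl⟩ : ∃ s, 0 < s ∧ v = s ^ 2 :=
    ⟨√v, Real.sqrt_pos.2 hv, (Real.sq_sqrt hv.le).symm⟩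
  have hlin : |u| ≤ s * (1 + u ^ 2 / (2 * s ^ 2)) := by
    field_simp
    nlinarith [sq_nonneg (|u| - s), sq_abs u]
  rw [Real.sqrt_sq hs.le]
  calc |u| * Real.exp (-u ^ 2 / (2 * s ^ 2))
      ≤ s * Real.exp (u ^ 2 / (2 * s ^ 2)) * Real.exp (-u ^ 2 / (2 * s ^ 2)) := by
        gcongr
        exact hlin.trans (by gcongr; linarith [Real.add_one_le_exp (u ^ 2 / (2 * s ^ 2))])
    _ = s := by rw [mul_assoc, ← Real.exp_add, neg_div, add_neg_cancel, Real.exp_zero, mul_one]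

lemma hasDerivAt_gaussianPDFReal (m : ℝ) (v : ℝ≥0) (y : ℝ) :
    HasDerivAt (gaussianPDFReal m v) ((m - y) / v * gaussianPDFReal m v y) y := by
  have h : HasDerivAt (fun t => -(t - m) ^ 2 / (2 * (v : ℝ))) (-(2 * (y - m)) / (2 * v)) y := by
    simpa using (((hasDerivAt_id y).sub_const m).pow 2).neg.div_const (2 * (v : ℝ))
  refine ((h.exp).const_mul (√(2 * π * v))⁻¹).congr_deriv ?_
  unfold gaussianPDFReal
  by_cases hv : (v : ℝ) = 0
  · simp [hv]
  · field_simp; ring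

lemma gaussianPDFReal_le (m : ℝ) (v : ℝ≥0) (y : ℝ) :
    gaussianPDFReal m v y ≤ (√(2 * π * v))⁻¹ := by
  unfold gaussianPDFReal
  refine mul_le_of_le_one_right (by positivity) (Real.exp_le_one_iff.2 ?_)
  exact div_nonpos_of_nonpos_of_nonneg (neg_nonpos.2 (sq_nonneg _)) (by positivity)

lemma abs_mul_gaussianPDFReal_le {v : ℝ≥0} (hv : v ≠ 0) (m y : ℝ) :
    |(m - y) / v * gaussianPDFReal m v y| ≤ (√(2 * π * v))⁻¹ / √v := by
  have hv' : (0 : ℝ) < v := NNReal.coe_pos.2 (pos_iff_ne_zero.2 hv)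
  have h := abs_mul_exp_neg_sq_div_le hv' (y - m)
  rw [abs_mul, abs_div, abs_of_pos hv', abs_of_nonneg (gaussianPDFReal_nonneg _ _ _),
    abs_sub_comm]
  unfold gaussianPDFReal
  calc |y - m| / v * ((√(2 * π * v))⁻¹ * rexp (-(y - m) ^ 2 / (2 * v)))
      = (√(2 * π * v))⁻¹ / v * (|y - m| * rexp (-(y - m) ^ 2 / (2 * v))) := by ring
    _ ≤ (√(2 * π * v))⁻¹ / v * √v := by gcongr
    _ = (√(2 * π * v))⁻¹ / √v := by
      field_simp; rw [Real.sq_sqrt hv'.le]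

noncomputable def tweedieDenoiser (v : ℝ≥0) (p : ℝ → ℝ) (y : ℝ) : ℝ :=
  y + v * deriv (fun u => Real.log (p u)) y

lemma measurable_tweedieDenoiser (v : ℝ≥0) (p : ℝ → ℝ) : Measurable (tweedieDenoiser v p) :=
  measurable_id.add ((measurable_deriv _).const_mul _)

lemma mul_gaussianPDFReal_eq {v : ℝ≥0} (hv : v ≠ 0) (x y : ℝ) :
    x * gaussianPDFReal x v y
      = y * gaussianPDFReal x v y + v * ((x - y) / v * gaussianPDFReal x v y) := by
  have hv' : (v : ℝ) ≠ 0 := NNReal.coe_ne_zero.2 hv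
  field_simp
  ring

section Mixture
variable (ν : Measure ℝ) [IsFiniteMeasure ν] {v : ℝ≥0}

lemma integrable_gaussianPDFReal_apply (v : ℝ≥0) (y : ℝ) :
    Integrable (fun x => gaussianPDFReal x v y) ν := by
  refine Integrable.of_bound (by unfold gaussianPDFReal; fun_prop) (√(2 * π * v))⁻¹
    (ae_of_all _ fun x => ?_)
  rw [Real.norm_of_nonneg (gaussianPDFReal_nonneg _ _ _)]
  exact gaussianPDFReal_le x v y

lemma integrable_sub_div_mul_gaussianPDFReal (hv : v ≠ 0) (y : ℝ) :
    Integrable (fun x => (x - y) / v * gaussianPDFReal x v y) ν :=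
  Integrable.of_bound (by unfold gaussianPDFReal; fun_prop)
    ((√(2 * π * v))⁻¹ / √v) (ae_of_all _ fun x => abs_mul_gaussianPDFReal_le hv x y)

lemma hasDerivAt_integral_gaussianPDFReal (hv : v ≠ 0) (y : ℝ) :
    HasDerivAt (fun t => ∫ x, gaussianPDFReal x v t ∂ν)
      (∫ x, (x - y) / v * gaussianPDFReal x v y ∂ν) y :=
  (hasDerivAt_integral_of_dominated_loc_of_deriv_le (Metric.ball_mem_nhds y one_pos)
    (.of_forall fun t => (integrable_gaussianPDFReal_apply ν v t).aestronglyMeasurable)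
    (integrable_gaussianPDFReal_apply ν v y)
    (integrable_sub_div_mul_gaussianPDFReal ν hv y).aestronglyMeasurable
    (ae_of_all _ fun x t _ => abs_mul_gaussianPDFReal_le hv x t) (integrable_const _)
    (ae_of_all _ fun x t _ => hasDerivAt_gaussianPDFReal x v t)).2

lemma integrable_mul_gaussianPDFReal (hv : v ≠ 0) (y : ℝ) :
    Integrable (fun x => x * gaussianPDFReal x v y) ν := by
  simp only [mul_gaussianPDFReal_eq hv]
  exact ((integrable_gaussianPDFReal_apply ν v y).const_mul y).add
    ((integrable_sub_div_mul_gaussianPDFReal ν hv y).const_mul _)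

lemma tweedieDenoiser_mul_eq_integral {p : ℝ → ℝ} (hv : v ≠ 0)
    (hp : ∀ y, p y = ∫ x, gaussianPDFReal x v y ∂ν) {y : ℝ} (hpy : 0 < p y) :
    tweedieDenoiser v p y * p y = ∫ x, x * gaussianPDFReal x v y ∂ν := by
  have hderiv : deriv (fun u => Real.log (p u)) y
      = (∫ x, (x - y) / v * gaussianPDFReal x v y ∂ν) / p y := by
    obtain rfl : p = fun t => ∫ x, gaussianPDFReal x v t ∂ν := funext hp
    exact ((hasDerivAt_integral_gaussianPDFReal ν hv y).log hpy.ne').deriv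
  simp only [mul_gaussianPDFReal_eq hv]
  rw [integral_add ((integrable_gaussianPDFReal_apply ν v y).const_mul y)
    ((integrable_sub_div_mul_gaussianPDFReal ν hv y).const_mul _), integral_const_mul,
    integral_const_mul, ← hp y, tweedieDenoiser, hderiv]
  field_simp

end Mixture

lemma measurable_gaussianPDF_swap (v : ℝ≥0) :
    Measurable fun q : ℝ × ℝ => gaussianPDF q.2 v q.1 :=
  measurable_uncurry_gaussianPDF.comp
    (measurable_snd.prodMk (measurable_const.prodMk measurable_fst))

lemma lintegral_gaussianReal_const_add {v : ℝ≥0} (hv : v ≠ 0) (x : ℝ) {f : ℝ → ℝ≥0∞}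
    (hf : Measurable f) :
    ∫⁻ w, f (x + w) ∂gaussianReal 0 v = ∫⁻ y, gaussianPDF x v y * f y := by
  rw [← lintegral_map hf (measurable_const_add x), gaussianReal_map_const_add, zero_add,
    gaussianReal_of_var_ne_zero _ hv, lintegral_withDensity_eq_lintegral_mul _
      (measurable_gaussianPDF x v) hf]
  rfl

section AddGaussian
variable {Ω : Type*} [MeasurableSpace Ω] {μ : Measure Ω} [IsProbabilityMeasure μ]
  {X W : Ω → ℝ} {v : ℝ≥0} {p : ℝ → ℝ}

lemma map_add_gaussian_prod (hX : Measurable X) (hW : Measurable W) (hindep : IndepFun X W μ)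
    (hWlaw : μ.map W = gaussianReal 0 v) (hv : v ≠ 0) :
    μ.map (fun ω => (X ω + W ω, X ω))
      = (volume.prod (μ.map X)).withDensity (fun q => gaussianPDF q.2 v q.1) := by
  have hjoint : μ.map (fun ω => (X ω, W ω)) = (μ.map X).prod (gaussianReal 0 v) := by
    rw [← hWlaw]
    exact (indepFun_iff_map_prod_eq_prod_map_map hX.aemeasurable hW.aemeasurable).1 hindep
  have hT : Measurable fun q : ℝ × ℝ => (q.1 + q.2, q.1) := by fun_prop
  have hdens := measurable_gaussianPDF_swap v
  rw [show (fun ω => (X ω + W ω, X ω))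
      = (fun q : ℝ × ℝ => (q.1 + q.2, q.1)) ∘ (fun ω => (X ω, W ω)) from rfl,
    ← Measure.map_map hT (hX.prodMk hW), hjoint]
  refine Measure.ext_of_lintegral _ fun f hf => ?_
  calc ∫⁻ q, f q ∂((μ.map X).prod (gaussianReal 0 v)).map (fun q => (q.1 + q.2, q.1))
      = ∫⁻ x, ∫⁻ w, f (x + w, x) ∂gaussianReal 0 v ∂μ.map X := by
        rw [lintegral_map hf hT]
        exact lintegral_prod _ (hf.comp hT).aemeasurable
    _ = ∫⁻ x, ∫⁻ y, gaussianPDF x v y * f (y, x) ∂volume ∂μ.map X := by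
        refine lintegral_congr fun x => ?_
        exact lintegral_gaussianReal_const_add hv x (f := fun y => f (y, x)) (by fun_prop)
    _ = ∫⁻ y, ∫⁻ x, gaussianPDF x v y * f (y, x) ∂μ.map X ∂volume :=
        lintegral_lintegral_swap (f := fun x y => gaussianPDF x v y * f (y, x))
          ((hdens.mul hf).comp measurable_swap).aemeasurable
    _ = ∫⁻ q, f q ∂(volume.prod (μ.map X)).withDensity (fun q => gaussianPDF q.2 v q.1) := by
        rw [lintegral_withDensity_eq_lintegral_mul _ hdens hf,
          lintegral_prod _ (hdens.mul hf).aemeasurable]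
        rfl

lemma lintegral_comp_add_gaussian (hX : Measurable X) (hW : Measurable W)
    (hindep : IndepFun X W μ) (hWlaw : μ.map W = gaussianReal 0 v) (hv : v ≠ 0)
    {G : ℝ × ℝ → ℝ≥0∞} (hG : Measurable G) :
    ∫⁻ ω, G (X ω + W ω, X ω) ∂μ = ∫⁻ y, ∫⁻ x, gaussianPDF x v y * G (y, x) ∂μ.map X := by
  rw [← lintegral_map hG (by fun_prop), map_add_gaussian_prod hX hW hindep hWlaw hv,
    lintegral_withDensity_eq_lintegral_mul _ (measurable_gaussianPDF_swap v) hG]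
  exact lintegral_prod _ ((measurable_gaussianPDF_swap v).mul hG).aemeasurable

lemma integral_comp_add_gaussian (hX : Measurable X) (hW : Measurable W)
    (hindep : IndepFun X W μ) (hWlaw : μ.map W = gaussianReal 0 v) (hv : v ≠ 0)
    {F : ℝ × ℝ → ℝ} (hF : Measurable F) (hFint : Integrable (fun ω => F (X ω + W ω, X ω)) μ) :
    ∫ ω, F (X ω + W ω, X ω) ∂μ = ∫ y, ∫ x, gaussianPDFReal x v y * F (y, x) ∂μ.map X := by
  have hY : Measurable fun ω => (X ω + W ω, X ω) := by fun_prop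
  have hlt : ∀ᵐ q ∂volume.prod (μ.map X), gaussianPDF q.2 v q.1 < ∞ :=
    ae_of_all _ fun _ => gaussianPDF_lt_top
  have hFint' : Integrable (fun q => (gaussianPDF q.2 v q.1).toReal • F q)
      (volume.prod (μ.map X)) := by
    rw [← integrable_withDensity_iff_integrable_smul' (measurable_gaussianPDF_swap v) hlt,
      ← map_add_gaussian_prod hX hW hindep hWlaw hv]
    exact (integrable_map_measure hF.aestronglyMeasurable hY.aemeasurable).2 hFint
  rw [← integral_map hY.aemeasurable hF.aestronglyMeasurable,
    map_add_gaussian_prod hX hW hindep hWlaw hv,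
    integral_withDensity_eq_integral_toReal_smul (measurable_gaussianPDF_swap v) hlt,
    integral_prod _ hFint']
  simp only [toReal_gaussianPDF, smul_eq_mul]

lemma integrable_tweedieDenoiser_comp (hX : Measurable X) (hW : Measurable W)
    (hindep : IndepFun X W μ) (hWlaw : μ.map W = gaussianReal 0 v) (hv : v ≠ 0)
    (hXint : Integrable X μ) (hp : ∀ y, p y = ∫ x, gaussianPDFReal x v y ∂μ.map X)
    (hppos : ∀ y, 0 < p y) :
    Integrable (fun ω => tweedieDenoiser v p (X ω + W ω)) μ := by
  set ν := μ.map X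
  set g := tweedieDenoiser v p
  have hg := measurable_tweedieDenoiser v p
  have hpdf : ∀ y, Measurable fun x => gaussianPDF x v y := fun y =>
    measurable_uncurry_gaussianPDF.comp
      (measurable_id.prodMk measurable_const : Measurable fun x : ℝ => (x, v, y))
  refine ⟨(hg.comp (hX.add hW)).aestronglyMeasurable, ?_⟩
  calc ∫⁻ ω, ‖g (X ω + W ω)‖ₑ ∂μ
      = ∫⁻ y, ∫⁻ x, gaussianPDF x v y * ‖g y‖ₑ ∂ν :=
        lintegral_comp_add_gaussian hX hW hindep hWlaw hv (G := fun q => ‖g q.1‖ₑ) (by fun_prop)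
    _ = ∫⁻ y, ‖∫ x, x * gaussianPDFReal x v y ∂ν‖ₑ := by
        refine lintegral_congr fun y => ?_
        rw [lintegral_mul_const _ (hpdf y), mul_comm,
          ← tweedieDenoiser_mul_eq_integral ν hv hp (hppos y), enorm_mul,
          Real.enorm_of_nonneg (hppos y).le, hp y,
          ofReal_integral_eq_lintegral_ofReal (integrable_gaussianPDFReal_apply ν v y)
            (ae_of_all _ fun _ => gaussianPDFReal_nonneg _ _ _)]
        rfl
    _ ≤ ∫⁻ y, ∫⁻ x, gaussianPDF x v y * ‖x‖ₑ ∂ν := by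
        refine lintegral_mono fun y => (enorm_integral_le_lintegral_enorm _).trans_eq ?_
        refine lintegral_congr fun x => ?_
        rw [enorm_mul, mul_comm, Real.enorm_of_nonneg (gaussianPDFReal_nonneg _ _ _)]
        rfl
    _ = ∫⁻ ω, ‖X ω‖ₑ ∂μ := (lintegral_comp_add_gaussian hX hW hindep hWlaw hv
        (G := fun q => ‖q.2‖ₑ) (by fun_prop)).symm
    _ < ∞ := hXint.2

lemma setIntegral_tweedieDenoiser_comp (hX : Measurable X) (hW : Measurable W)
    (hindep : IndepFun X W μ) (hWlaw : μ.map W = gaussianReal 0 v) (hv : v ≠ 0)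
    (hXint : Integrable X μ) (hp : ∀ y, p y = ∫ x, gaussianPDFReal x v y ∂μ.map X)
    (hppos : ∀ y, 0 < p y) {A : Set ℝ} (hA : MeasurableSet A) :
    ∫ ω in (fun ω => X ω + W ω) ⁻¹' A, tweedieDenoiser v p (X ω + W ω) ∂μ
      = ∫ ω in (fun ω => X ω + W ω) ⁻¹' A, X ω ∂μ := by
  set ν := μ.map X
  set g := tweedieDenoiser v p
  have hgint := integrable_tweedieDenoiser_comp hX hW hindep hWlaw hv hXint hp hppos
  set F : ℝ × ℝ → ℝ := fun q => A.indicator 1 q.1 * (g q.1 - q.2)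
  have hF : Measurable F :=
    ((measurable_const.indicator hA).comp measurable_fst).mul
      (((measurable_tweedieDenoiser v p).comp measurable_fst).sub measurable_snd)
  have hFY : (fun ω => F (X ω + W ω, X ω))
      = ((fun ω => X ω + W ω) ⁻¹' A).indicator fun ω => g (X ω + W ω) - X ω := by
    funext ω
    by_cases h : X ω + W ω ∈ A <;> simp [F, h]
  have hinner : ∀ y, ∫ x, gaussianPDFReal x v y * F (y, x) ∂ν = 0 := by
    intro y
    have hpt : ∀ x, gaussianPDFReal x v y * F (y, x)
        = A.indicator 1 y * (g y * gaussianPDFReal x v y - x * gaussianPDFReal x v y) := by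
      intro x; simp only [F]; ring
    simp_rw [hpt]
    rw [integral_const_mul, integral_sub ((integrable_gaussianPDFReal_apply ν v y).const_mul _)
      (integrable_mul_gaussianPDFReal ν hv y), integral_const_mul, ← hp y,
      tweedieDenoiser_mul_eq_integral ν hv hp (hppos y), sub_self, mul_zero]
  have hYA : MeasurableSet ((fun ω => X ω + W ω) ⁻¹' A) := (hX.add hW) hA
  have hFint : Integrable (fun ω => F (X ω + W ω, X ω)) μ := by
    rw [hFY]; exact (hgint.sub hXint).indicator hYA
  rw [← sub_eq_zero, ← integral_sub hgint.integrableOn hXint.integrableOn,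
    ← integral_indicator hYA, ← hFY, integral_comp_add_gaussian hX hW hindep hWlaw hv hF hFint]
  exact integral_eq_zero_of_ae (ae_of_all _ hinner)

theorem tweedieDenoiser_comp_ae_eq_condExp (hX : Measurable X) (hW : Measurable W)
    (hindep : IndepFun X W μ) (hWlaw : μ.map W = gaussianReal 0 v) (hv : v ≠ 0)
    (hXint : Integrable X μ) (hp : ∀ y, p y = ∫ x, gaussianPDFReal x v y ∂μ.map X)
    (hppos : ∀ y, 0 < p y) :
    (fun ω => tweedieDenoiser v p (X ω + W ω))
      =ᵐ[μ] μ[X | MeasurableSpace.comap (fun ω => X ω + W ω) inferInstance] := by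
  have hY : Measurable fun ω => X ω + W ω := hX.add hW
  have hgint := integrable_tweedieDenoiser_comp hX hW hindep hWlaw hv hXint hp hppos
  refine ae_eq_condExp_of_forall_setIntegral_eq hY.comap_le hXint
    (fun _ _ _ => hgint.integrableOn) ?_ ?_
  · rintro _ ⟨A, hA, rfl⟩ _
    exact setIntegral_tweedieDenoiser_comp hX hW hindep hWlaw hv hXint hp hppos hA
  · exact ((measurable_tweedieDenoiser v p).comp
      (Measurable.of_comap_le le_rfl)).aestronglyMeasurable

end AddGaussian

theorem stmt_2_general
    {Ω : Type*} [MeasurableSpace Ω] (μ : Measure Ω) [IsProbabilityMeasure μ]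
    (X Z : Ω → ℝ) (hX : Measurable X) (hZ : Measurable Z)
    (hZlaw : Measure.map Z μ = gaussianReal 0 1)
    (hindep : IndepFun X Z μ)
    (hX2 : MemLp X 2 μ)
    (τ : ℝ) (hτ : 0 < τ)
    (p : ℝ → ℝ)
    (hp : ∀ y, p y = ∫ x, (Real.sqrt (2 * Real.pi * τ ^ 2))⁻¹ *
            Real.exp (-(y - x) ^ 2 / (2 * τ ^ 2)) ∂(Measure.map X μ))
    (hppos : ∀ y, 0 < p y) :
    (fun ω => (X ω + τ * Z ω) + τ ^ 2 * deriv (fun u => Real.log (p u)) (X ω + τ * Z ω))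
      =ᵐ[μ] μ[X | MeasurableSpace.comap (fun ω => X ω + τ * Z ω) inferInstance] := by
  have hWlaw : μ.map (fun ω => τ * Z ω) = gaussianReal 0 ⟨τ ^ 2, sq_nonneg τ⟩ := by
    have h := (gaussianReal_const_mul ⟨hZ.aemeasurable, hZlaw⟩ τ).map_eq
    rwa [mul_zero, mul_one] at h
  have hv : (⟨τ ^ 2, sq_nonneg τ⟩ : ℝ≥0) ≠ 0 := NNReal.coe_ne_zero.1 (pow_pos hτ 2).ne'
  exact tweedieDenoiser_comp_ae_eq_condExp hX (hZ.const_mul τ)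
    (hindep.comp measurable_id (measurable_const_mul τ)) hWlaw hv (hX2.integrable one_le_two)
    hp hppos

/-- Tweedie's formula: the posterior mean of `X` given `X + τZ = y` equals
`y + τ² ∂_y log p(y; τ)`, where `p(·; τ)` is the density of `X + τZ`. -/
theorem stmt_2
    {Ω : Type*} [MeasurableSpace Ω] (μ : Measure Ω) [IsProbabilityMeasure μ]
    (X Z : Ω → ℝ) (hX : Measurable X) (hZ : Measurable Z)
    (hZlaw : Measure.map Z μ = gaussianReal 0 1)
    (hindep : IndepFun X Z μ)
    (hX2 : MemLp X 2 μ)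
    (τ : ℝ) (hτ : 0 < τ)
    (p : ℝ → ℝ)
    (hp : ∀ y, p y = ∫ x, (Real.sqrt (2 * Real.pi * τ ^ 2))⁻¹ *
            Real.exp (-(y - x) ^ 2 / (2 * τ ^ 2)) ∂(Measure.map X μ))
    (hppos : ∀ y, 0 < p y)
    (hpsmooth : ∀ y, DifferentiableAt ℝ (fun u => Real.log (p u)) y) :
    (fun ω => (X ω + τ * Z ω) + τ ^ 2 * deriv (fun u => Real.log (p u)) (X ω + τ * Z ω))
      =ᵐ[μ] μ[X | MeasurableSpace.comap (fun ω => X ω + τ * Z ω) inferInstance] :=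
  stmt_2_general μ X Z hX hZ hZlaw hindep hX2 τ hτ p hp hppos
end

section
/- Let p be a probability density on ℝ obtained as the convolution of any probability measure μ with the Gaussian N(0, τ²) for τ > 0. Then the score function ∂_y log p(y) is Lipschitz on any region where an a priori second-moment bound holds; concretely, if μ is supported in [−K, K], then ∂_y log p is (K²/τ⁴ + 1/τ²)-Lipschitz on ℝ. -/
open MeasureTheory Real Set Function

/-!
Write `M_k(y) = ∫ x^k φ_τ(y - x) dν(x)`, so that `p = M_0` and `M_1 / M_0`, `M_2 / M_0` are the
posterior moments of `X` given `Y = y`. Since `∂_y φ_τ(y - x) = (x - y)/τ² · φ_τ(y - x)`, we get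
`M_k' = (M_{k+1} - y M_k)/τ²`. Hence `(log p)' = (E[X|Y=y] - y)/τ²` (Tweedie) and
`(log p)'' = Var(X|Y=y)/τ⁴ - 1/τ²`, with `0 ≤ Var(X|Y=y) ≤ K²` because `ν` lives on `[-K, K]`.
The Lipschitz bound is then the mean value inequality. Compact support of `ν` is what justifies
differentiating under the integral sign.
-/

section ParametricIntegral

variable {α E : Type*} [TopologicalSpace α] [MeasurableSpace α] [OpensMeasurableSpace α]
  [T2Space α] [NormedAddCommGroup E] {ν : Measure α} [IsFiniteMeasureOnCompacts ν] {S : Set α}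

theorem Continuous.integrable_of_ae_mem_isCompact {f : α → E} (hf : Continuous f)
    (hS : IsCompact S) (hν : ∀ᵐ x ∂ν, x ∈ S) : Integrable f ν := by
  rw [← Measure.restrict_eq_self_of_ae_mem hν]
  exact hf.continuousOn.integrableOn_compact hS

theorem hasDerivAt_integral_of_ae_mem_isCompact [NormedSpace ℝ E]
    [SecondCountableTopologyEither α E] {F F' : ℝ → α → E}
    (hS : IsCompact S) (hν : ∀ᵐ x ∂ν, x ∈ S)
    (hF : Continuous (uncurry F)) (hF' : Continuous (uncurry F'))
    (hderiv : ∀ y x, HasDerivAt (F · x) (F' y x) y) (y₀ : ℝ) :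
    HasDerivAt (fun y => ∫ x, F y x ∂ν) (∫ x, F' y₀ x ∂ν) y₀ := by
  have hFx (y : ℝ) : Continuous (F y) := hF.comp (Continuous.prodMk_right y)
  have hF'x (y : ℝ) : Continuous (F' y) := hF'.comp (Continuous.prodMk_right y)
  obtain ⟨C, hC⟩ := ((isCompact_closedBall y₀ 1).prod hS).exists_bound_of_continuousOn
    hF'.continuousOn
  refine (hasDerivAt_integral_of_dominated_loc_of_deriv_le (bound := fun _ => C)
    (Metric.closedBall_mem_nhds y₀ one_pos) (.of_forall fun y => (hFx y).aestronglyMeasurable)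
    ((hFx y₀).integrable_of_ae_mem_isCompact hS hν) (hF'x y₀).aestronglyMeasurable ?_
    (continuous_const.integrable_of_ae_mem_isCompact hS hν)
    (.of_forall fun x y _ => hderiv y x)).2
  filter_upwards [hν] with x hx y hy using hC (y, x) ⟨hy, hx⟩

end ParametricIntegral

theorem sq_integral_mul_le_integral_sq_mul_mul_integral {α : Type*} [MeasurableSpace α]
    {μ : Measure α} {f w : α → ℝ} (hw : 0 ≤ w) (hw_int : Integrable w μ)
    (hfw : Integrable (fun x => f x * w x) μ) (hf2w : Integrable (fun x => f x ^ 2 * w x) μ) :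
    (∫ x, f x * w x ∂μ) ^ 2 ≤ (∫ x, f x ^ 2 * w x ∂μ) * ∫ x, w x ∂μ := by
  have hquad (t : ℝ) : 0 ≤ (∫ x, w x ∂μ) * (t * t) + (-2 * ∫ x, f x * w x ∂μ) * t
      + ∫ x, f x ^ 2 * w x ∂μ := by
    have hexpand : ∫ x, (t - f x) ^ 2 * w x ∂μ = (∫ x, w x ∂μ) * (t * t)
        + (-2 * ∫ x, f x * w x ∂μ) * t + ∫ x, f x ^ 2 * w x ∂μ := by
      simp_rw [show ∀ x, (t - f x) ^ 2 * w x = (t * t) * w x + (-2 * t) * (f x * w x)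
        + f x ^ 2 * w x from fun x => by ring]
      rw [integral_add (by exact (hw_int.const_mul _).add (hfw.const_mul _)) hf2w,
        integral_add (hw_int.const_mul _) (hfw.const_mul _), integral_const_mul,
        integral_const_mul]
      ring
    rw [← hexpand]
    exact integral_nonneg fun x => mul_nonneg (sq_nonneg _) (hw x)
  have := discrim_le_zero hquad
  rw [discrim] at this
  linarith

noncomputable def gaussKernel (τ y x : ℝ) : ℝ :=
  (√(2 * π * τ ^ 2))⁻¹ * exp (-(y - x) ^ 2 / (2 * τ ^ 2))

theorem gaussKernel_pos {τ : ℝ} (hτ : τ ≠ 0) (y x : ℝ) : 0 < gaussKernel τ y x := by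
  unfold gaussKernel
  positivity

@[fun_prop]
theorem Continuous.gaussKernel {β : Type*} [TopologicalSpace β] {f g : β → ℝ} (τ : ℝ)
    (hf : Continuous f) (hg : Continuous g) : Continuous fun z => gaussKernel τ (f z) (g z) := by
  unfold _root_.gaussKernel
  fun_prop

theorem hasDerivAt_gaussKernel (τ x y : ℝ) :
    HasDerivAt (gaussKernel τ · x) ((x - y) / τ ^ 2 * gaussKernel τ y x) y := by
  have hexponent : HasDerivAt (fun y => -(y - x) ^ 2 / (2 * τ ^ 2)) ((x - y) / τ ^ 2) y :=
    ((((hasDerivAt_id y).sub_const x).pow 2).neg.div_const _).congr_deriv <| by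
      simp only [Nat.cast_ofNat, id_eq, Nat.add_one_sub_one, pow_one, mul_one]
      ring
  exact (hexponent.exp.const_mul _).congr_deriv (by unfold gaussKernel; ring)

/-- Unnormalised `k`-th moment of the posterior of `X ~ ν` given `Y = X + N(0, τ²) = y`. -/
noncomputable def gaussMoment (ν : Measure ℝ) (τ : ℝ) (k : ℕ) (y : ℝ) : ℝ :=
  ∫ x, x ^ k * gaussKernel τ y x ∂ν

noncomputable def posteriorMean (ν : Measure ℝ) (τ y : ℝ) : ℝ :=
  gaussMoment ν τ 1 y / gaussMoment ν τ 0 y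

noncomputable def posteriorVariance (ν : Measure ℝ) (τ y : ℝ) : ℝ :=
  gaussMoment ν τ 2 y / gaussMoment ν τ 0 y - posteriorMean ν τ y ^ 2

section GaussMoment

variable {ν : Measure ℝ} [IsFiniteMeasure ν] {K τ : ℝ} (hν : ∀ᵐ x ∂ν, x ∈ Icc (-K) K)
include hν

theorem integrable_pow_mul_gaussKernel (k : ℕ) (y : ℝ) :
    Integrable (fun x => x ^ k * gaussKernel τ y x) ν :=
  Continuous.integrable_of_ae_mem_isCompact (by fun_prop) isCompact_Icc hν

theorem hasDerivAt_gaussMoment (k : ℕ) (y : ℝ) :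
    HasDerivAt (gaussMoment ν τ k)
      ((gaussMoment ν τ (k + 1) y - y * gaussMoment ν τ k y) / τ ^ 2) y := by
  have h := hasDerivAt_integral_of_ae_mem_isCompact isCompact_Icc hν
    (F := fun y x => x ^ k * gaussKernel τ y x)
    (F' := fun y x => x ^ k * ((x - y) / τ ^ 2 * gaussKernel τ y x)) (by fun_prop) (by fun_prop)
    (fun y x => (hasDerivAt_gaussKernel τ x y).const_mul _) y
  refine h.congr_deriv ?_
  simp_rw [show ∀ x, x ^ k * ((x - y) / τ ^ 2 * gaussKernel τ y x)
    = (x ^ (k + 1) * gaussKernel τ y x - y * (x ^ k * gaussKernel τ y x)) / τ ^ 2 from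
    fun x => by ring]
  rw [integral_div, integral_sub (integrable_pow_mul_gaussKernel hν _ _)
    ((integrable_pow_mul_gaussKernel hν _ _).const_mul _), integral_const_mul]
  rfl

theorem gaussMoment_zero_pos [NeZero ν] (hτ : τ ≠ 0) (y : ℝ) : 0 < gaussMoment ν τ 0 y := by
  refine (integral_pos_iff_support_of_nonneg (fun x => ?_)
    (integrable_pow_mul_gaussKernel hν 0 y)).2 ?_
  · simpa using (gaussKernel_pos hτ y x).le
  · simpa [Function.support, (gaussKernel_pos hτ y _).ne'] using
      Measure.measure_univ_pos.2 (NeZero.ne ν)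

theorem posteriorVariance_nonneg [NeZero ν] (hτ : τ ≠ 0) (y : ℝ) :
    0 ≤ posteriorVariance ν τ y := by
  have hM0 := gaussMoment_zero_pos hν hτ y
  have hCS : gaussMoment ν τ 1 y ^ 2 ≤ gaussMoment ν τ 2 y * gaussMoment ν τ 0 y := by
    simpa [gaussMoment] using sq_integral_mul_le_integral_sq_mul_mul_integral
      (fun x => (gaussKernel_pos hτ y x).le) (by simpa using integrable_pow_mul_gaussKernel hν 0 y)
      (by simpa using integrable_pow_mul_gaussKernel hν 1 y) (integrable_pow_mul_gaussKernel hν 2 y)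
  rw [posteriorVariance, posteriorMean, div_pow, sub_nonneg, div_le_div_iff₀ (by positivity) hM0]
  nlinarith

theorem posteriorVariance_le [NeZero ν] (hτ : τ ≠ 0) (y : ℝ) :
    posteriorVariance ν τ y ≤ K ^ 2 := by
  have hM0 := gaussMoment_zero_pos hν hτ y
  have hM2 : gaussMoment ν τ 2 y ≤ K ^ 2 * gaussMoment ν τ 0 y := by
    rw [gaussMoment, gaussMoment, ← integral_const_mul]
    refine integral_mono_ae (integrable_pow_mul_gaussKernel hν 2 y)
      ((integrable_pow_mul_gaussKernel hν 0 y).const_mul _) ?_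
    filter_upwards [hν] with x hx
    rw [pow_zero, one_mul]
    exact mul_le_mul_of_nonneg_right (sq_le_sq' hx.1 hx.2) (gaussKernel_pos hτ y x).le
  rw [posteriorVariance]
  linarith [(div_le_iff₀ hM0).2 hM2, sq_nonneg (posteriorMean ν τ y)]

theorem hasDerivAt_posteriorMean [NeZero ν] (hτ : τ ≠ 0) (y : ℝ) :
    HasDerivAt (posteriorMean ν τ) (posteriorVariance ν τ y / τ ^ 2) y := by
  have hM0 := (gaussMoment_zero_pos hν hτ y).ne'
  refine ((hasDerivAt_gaussMoment hν 1 y).div (hasDerivAt_gaussMoment hν 0 y) hM0).congr_deriv ?_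
  rw [posteriorVariance, posteriorMean]
  field_simp
  ring

theorem hasDerivAt_log_gaussMoment_zero [NeZero ν] (hτ : τ ≠ 0) (y : ℝ) :
    HasDerivAt (fun u => log (gaussMoment ν τ 0 u)) ((posteriorMean ν τ y - y) / τ ^ 2) y := by
  have hM0 := (gaussMoment_zero_pos hν hτ y).ne'
  refine ((hasDerivAt_gaussMoment hν 0 y).log hM0).congr_deriv ?_
  rw [posteriorMean]
  field_simp

end GaussMoment

theorem stmt_19_general
    (ν : Measure ℝ) [IsProbabilityMeasure ν]
    (K τ : ℝ) (hτ : 0 < τ)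
    (hsupp : ν (Set.Icc (-K) K)ᶜ = 0)
    (p : ℝ → ℝ)
    (hp : ∀ y, p y = ∫ x, (Real.sqrt (2 * Real.pi * τ ^ 2))⁻¹ *
        Real.exp (-(y - x) ^ 2 / (2 * τ ^ 2)) ∂ν) :
    ∀ y z : ℝ,
      |deriv (fun u => Real.log (p u)) y - deriv (fun u => Real.log (p u)) z|
        ≤ (K ^ 2 / τ ^ 4 + 1 / τ ^ 2) * |y - z| := by
  intro y z
  have hν : ∀ᵐ x ∂ν, x ∈ Icc (-K) K := ae_iff.2 hsupp
  have hp : p = gaussMoment ν τ 0 := funext fun y => by simp [hp, gaussMoment, gaussKernel]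
  subst hp
  have hscore (w : ℝ) := hasDerivAt_log_gaussMoment_zero hν hτ.ne' w
  have hscore_deriv (w : ℝ) : HasDerivAt (fun u => (posteriorMean ν τ u - u) / τ ^ 2)
      (posteriorVariance ν τ w / τ ^ 4 - 1 / τ ^ 2) w :=
    (((hasDerivAt_posteriorMean hν hτ.ne' w).sub (hasDerivAt_id w)).div_const _).congr_deriv
      (by field_simp)
  have hbound (w : ℝ) :
      ‖posteriorVariance ν τ w / τ ^ 4 - 1 / τ ^ 2‖ ≤ K ^ 2 / τ ^ 4 + 1 / τ ^ 2 := by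
    have hV0 : 0 ≤ posteriorVariance ν τ w / τ ^ 4 :=
      div_nonneg (posteriorVariance_nonneg hν hτ.ne' w) (by positivity)
    have hVK : posteriorVariance ν τ w / τ ^ 4 ≤ K ^ 2 / τ ^ 4 := by
      gcongr
      exact posteriorVariance_le hν hτ.ne' w
    rw [Real.norm_eq_abs, abs_sub_le_iff]
    constructor <;> linarith [show 0 < 1 / τ ^ 2 by positivity]
  rw [(hscore y).deriv, (hscore z).deriv]
  simpa using convex_univ.norm_image_sub_le_of_norm_hasDerivWithin_le
    (fun w _ => (hscore_deriv w).hasDerivWithinAt) (fun w _ => hbound w) (mem_univ z) (mem_univ y)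

/-- If `ν` is a probability measure supported in `[-K, K]` and `p` is its convolution with
`N(0, τ²)`, then the score `∂_y log p` is `(K²/τ⁴ + 1/τ²)`-Lipschitz on `ℝ`. -/
theorem stmt_19
    (ν : Measure ℝ) [IsProbabilityMeasure ν]
    (K τ : ℝ) (hK : 0 ≤ K) (hτ : 0 < τ)
    (hsupp : ν (Set.Icc (-K) K)ᶜ = 0)
    (p : ℝ → ℝ)
    (hp : ∀ y, p y = ∫ x, (Real.sqrt (2 * Real.pi * τ ^ 2))⁻¹ *
        Real.exp (-(y - x) ^ 2 / (2 * τ ^ 2)) ∂ν) :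
    ∀ y z : ℝ,
      |deriv (fun u => Real.log (p u)) y - deriv (fun u => Real.log (p u)) z|
        ≤ (K ^ 2 / τ ^ 4 + 1 / τ ^ 2) * |y - z| :=
  stmt_19_general ν K τ hτ hsupp p hp
end
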